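/- Let s : ℝⁿ → ℝ be smooth and define the geomentum operator p_j = -iħ·(∂_j + M_{∂_j s}) acting on smooth functions ℝⁿ → ℂ, and let x_i denote multiplication by the i-th coordinate. Then the generalized geometric commutator satisfies [x_i, p_j](ψ) = iħ·(δ_{ij} + x_i·∂_j s)·ψ for every smooth ψ, where [A,B] = [A,B]_cr + A∘[M_s,B]_cr - B∘[M_s,A]_cr. -/

import Mathlib

/-- The `j`-th partial derivative of a function on `ℝⁿ`. -/
noncomputable def pderiv' {n : ℕ} (j : Fin n) (φ : (Fin n → ℝ) → ℂ) :
    (Fin n → ℝ) → ℂ :=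
  fun x => fderiv ℝ φ x (Pi.single j 1)

/-- The `j`-th partial derivative of a real-valued function on `ℝⁿ`. -/
noncomputable def pderivR {n : ℕ} (j : Fin n) (s : (Fin n → ℝ) → ℝ) :
    (Fin n → ℝ) → ℝ :=
  fun x => fderiv ℝ s x (Pi.single j 1)

/-- The geomentum operator `p_j = -ihbar(∂_j + (∂_j s)·)`. -/
noncomputable def geomentum {n : ℕ} (hbar : ℝ) (s : (Fin n → ℝ) → ℝ) (j : Fin n) :
    ((Fin n → ℝ) → ℂ) → ((Fin n → ℝ) → ℂ) :=
  fun φ x => -Complex.I * (hbar : ℂ) * (pderiv' j φ x + (pderivR j s x : ℂ) * φ x)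

/-- Multiplication by the `i`-th coordinate. -/
def coordOp {n : ℕ} (i : Fin n) : ((Fin n → ℝ) → ℂ) → ((Fin n → ℝ) → ℂ) :=
  fun φ x => (x i : ℂ) * φ x

/-- Multiplication by the (real-valued) structural function `s`. -/
def structOp {n : ℕ} (s : (Fin n → ℝ) → ℝ) :
    ((Fin n → ℝ) → ℂ) → ((Fin n → ℝ) → ℂ) :=
  fun φ x => (s x : ℂ) * φ x

lemma pd_mul {n : ℕ} (j : Fin n) (f g : (Fin n → ℝ) → ℂ) (x : Fin n → ℝ)
    (hf : DifferentiableAt ℝ f x) (hg : DifferentiableAt ℝ g x) :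
    pderiv' j (fun y => f y * g y) x = pderiv' j f x * g x + f x * pderiv' j g x := by
  unfold pderiv'
  rw [fderiv_fun_mul hf hg]
  simp [smul_eq_mul]
  ring

lemma pd_ofReal {n : ℕ} (j : Fin n) (s : (Fin n → ℝ) → ℝ) (x : Fin n → ℝ)
    (hs : DifferentiableAt ℝ s x) :
    pderiv' j (fun y => ((s y : ℝ) : ℂ)) x = (pderivR j s x : ℂ) := by
  unfold pderiv' pderivR
  rw [show (fun y => ((s y : ℝ) : ℂ)) = (⇑Complex.ofRealCLM ∘ s) from rfl,
    (Complex.ofRealCLM.hasFDerivAt.comp x hs.hasFDerivAt).fderiv]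
  simp

lemma pd_coord {n : ℕ} (i j : Fin n) (x : Fin n → ℝ) :
    pderiv' j (fun y : Fin n → ℝ => ((y i : ℝ) : ℂ)) x = if i = j then 1 else 0 := by
  unfold pderiv'
  have h : (fun y : Fin n → ℝ => ((y i : ℝ) : ℂ))
      = (Complex.ofRealCLM.comp (ContinuousLinearMap.proj (R := ℝ) (φ := fun _ : Fin n => ℝ) i)) := rfl
  rw [h, ContinuousLinearMap.fderiv]
  simp [Pi.single_apply, apply_ite]

lemma pd_zero {n : ℕ} (j : Fin n) (x : Fin n → ℝ) :
    pderiv' j (0 : (Fin n → ℝ) → ℂ) x = 0 := by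
  unfold pderiv'
  rw [show (0 : (Fin n → ℝ) → ℂ) = fun _ => 0 from rfl, fderiv_fun_const]
  simp

theorem geometric_canonical_commutation {n : ℕ} (hbar : ℝ) (hhb : hbar ≠ 0)
    (s : (Fin n → ℝ) → ℝ) (hs : ContDiff ℝ (⊤ : ℕ∞) s) (i j : Fin n)
    (ψ : (Fin n → ℝ) → ℂ) (hψ : ContDiff ℝ (⊤ : ℕ∞) ψ) :
    (coordOp i (geomentum hbar s j ψ) - geomentum hbar s j (coordOp i ψ))
      + (coordOp i (structOp s (geomentum hbar s j ψ) - geomentum hbar s j (structOp s ψ))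
        - geomentum hbar s j (structOp s (coordOp i ψ) - coordOp i (structOp s ψ)))
      = fun x => Complex.I * (hbar : ℂ) *
          (((if i = j then (1 : ℂ) else 0)) + (x i : ℂ) * (pderivR j s x : ℂ)) * ψ x := by
  have hdψ : Differentiable ℝ ψ := hψ.differentiable (by simp)
  have hds : Differentiable ℝ (fun y => ((s y : ℝ) : ℂ)) :=
    Complex.ofRealCLM.differentiable.comp (hs.differentiable (by simp))
  have hdc : ∀ i : Fin n, Differentiable ℝ (fun y : Fin n → ℝ => ((y i : ℝ) : ℂ)) := fun i =>
    Complex.ofRealCLM.differentiable.comp (differentiable_pi.mp differentiable_id i)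
  have hzero : structOp s (coordOp i ψ) - coordOp i (structOp s ψ) = 0 := by
    funext x
    simp only [Pi.sub_apply, structOp, coordOp, Pi.zero_apply]
    ring
  rw [hzero]
  have hc : coordOp i ψ = fun y => ((y i : ℝ) : ℂ) * ψ y := rfl
  have hst : structOp s ψ = fun y => ((s y : ℝ) : ℂ) * ψ y := rfl
  rw [hc, hst]
  funext x
  simp only [coordOp, structOp, geomentum, Pi.sub_apply, Pi.add_apply, Pi.zero_apply]
  rw [pd_zero, pd_mul j _ ψ x ((hdc i).differentiableAt) (hdψ.differentiableAt),
      pd_mul j _ ψ x (hds.differentiableAt) (hdψ.differentiableAt),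
      pd_coord, pd_ofReal j s x ((hs.differentiable (by simp)).differentiableAt)]
  ring
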